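/- For off-diagonal indices $p\neq q\neq k\neq p$ and any $t,u$, the mixed moment of matricially free Gaussian operators satisfies $\Psi_q(\omega_{p,q}(u)\,\omega_{k,p}(t)^4\,\omega_{p,q}(u)) = b_{k,p}(t)^2\, b_{p,q}(u)$, whereas for a diagonal middle operator, $\Psi_q(\omega_{p,q}(u)\,\omega_{p,p}(t)^4\,\omega_{p,q}(u)) = 2\,b_{p,p}(t)^2\, b_{p,q}(u)$. -/

import Mathlib

/-!
Each `ω = ℘ + ℘*` is self-adjoint, so `Ψ_q(ω_{p,q}(u) X⁴ ω_{p,q}(u)) = ‖X² ω_{p,q}(u) Ω_q‖²`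
with `ω_{p,q}(u) Ω_q = √b_{p,q}(u) e_{(p,u)}`. For `k ≠ p` the only surviving path of `ω_{k,p}(t)²`
on `e_{(p,u)}` creates `(k,t)` and annihilates it again, giving `b_{k,p}(t) e_{(p,u)}`. For the
diagonal operator, `ω_{p,p}(t)²` also has the path creating `(p,t)` twice, so
`ω_{p,p}(t)² e_{(p,u)} = b_{p,p}(t) (e_{(p,t),(p,t),(p,u)} + e_{(p,u)})`, a sum of two orthogonal
vectors, whence the factor `2`.
-/

open ContinuousLinearMap

/-- `x = (s, [(a₁, w₁), …, (aₙ, wₙ)])` indexes the basis vector `e_{a₁,w₁} ⊗ ⋯ ⊗ e_{aₙ,wₙ}` over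
`Ω_s`; `℘_{p,q}(u)` acts on it nontrivially iff `a₁ = q`, or `s = q` when `n = 0`. -/
def actsOn {r t : ℕ} (q : Fin r) (x : Fin r × List (Fin r × Fin t)) : Bool :=
  match x.2 with
  | [] => x.1 == q
  | (a, _) :: _ => a == q

section WeightedShift

variable {𝕜 ι H : Type*} [RCLike 𝕜] [NormedAddCommGroup H] [InnerProductSpace 𝕜 H] {e : ι → H}

theorem eq_of_forall_inner_eq_of_dense_span
    (hdense : (Submodule.span 𝕜 (Set.range e)).topologicalClosure = ⊤) {x y : H}
    (h : ∀ i, inner 𝕜 (e i) x = inner 𝕜 (e i) y) : x = y := by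
  refine (Submodule.dense_iff_topologicalClosure_eq_top.mpr hdense).eq_of_inner_right 𝕜
    fun v hv => ?_
  induction hv using Submodule.span_induction with
  | mem _ hv => obtain ⟨i, rfl⟩ := hv; exact h i
  | zero => simp
  | add _ _ _ _ h₁ h₂ => rw [inner_add_left, inner_add_left, h₁, h₂]
  | smul a _ _ h₁ => rw [inner_smul_left, inner_smul_left, h₁]

variable [CompleteSpace H]

theorem weightedShift_adjoint_apply_image (he : Orthonormal 𝕜 e)
    (hdense : (Submodule.span 𝕜 (Set.range e)).topologicalClosure = ⊤)
    {T : H →L[𝕜] H} {α : ι → 𝕜} {g : ι → ι} (hT : ∀ i, T (e i) = α i • e (g i))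
    (hg : Function.Injective g) (i : ι) :
    adjoint T (e (g i)) = starRingEnd 𝕜 (α i) • e i := by
  classical
  refine eq_of_forall_inner_eq_of_dense_span hdense fun j => ?_
  rw [adjoint_inner_right, hT, inner_smul_left, inner_smul_right, orthonormal_iff_ite.mp he,
    orthonormal_iff_ite.mp he, hg.eq_iff]
  split_ifs with h <;> simp [h]

theorem weightedShift_adjoint_apply_eq_zero (he : Orthonormal 𝕜 e)
    (hdense : (Submodule.span 𝕜 (Set.range e)).topologicalClosure = ⊤)
    {T : H →L[𝕜] H} {α : ι → 𝕜} {g : ι → ι} (hT : ∀ i, T (e i) = α i • e (g i))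
    {j : ι} (hj : j ∉ Set.range g) :
    adjoint T (e j) = 0 := by
  refine eq_of_forall_inner_eq_of_dense_span hdense fun i => ?_
  rw [adjoint_inner_right, hT, inner_smul_left, inner_zero_right,
    he.inner_eq_zero (fun h => hj ⟨i, h⟩), mul_zero]

end WeightedShift

section MatriciallyFree

variable {H : Type*} [NormedAddCommGroup H] [InnerProductSpace ℂ H] {r t : ℕ}

/-- `c` acts as the creation operator `℘_{a,j}(w)` of covariance `β` on the basis `e`. -/
def IsCreation (e : Fin r × List (Fin r × Fin t) → H) (c : H →L[ℂ] H) (a j : Fin r) (w : Fin t)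
    (β : ℝ) : Prop :=
  ∀ x, c (e x) = if actsOn j x then (Real.sqrt β : ℂ) • e (x.1, (a, w) :: x.2) else 0

variable {e : Fin r × List (Fin r × Fin t) → H} {c : H →L[ℂ] H} {a j : Fin r} {w : Fin t} {β : ℝ}

theorem IsCreation.apply_eq_smul (hc : IsCreation e c a j w β) (x : Fin r × List (Fin r × Fin t)) :
    c (e x) = (if actsOn j x then (Real.sqrt β : ℂ) else 0) • e (x.1, (a, w) :: x.2) := by
  rw [hc, ite_smul, zero_smul]

variable [CompleteSpace H]

theorem IsCreation.adjoint_apply_nil (he : Orthonormal ℂ e)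
    (hdense : (Submodule.span ℂ (Set.range e)).topologicalClosure = ⊤)
    (hc : IsCreation e c a j w β) (s : Fin r) : adjoint c (e (s, [])) = 0 :=
  weightedShift_adjoint_apply_eq_zero he hdense hc.apply_eq_smul
    (by rintro ⟨x, hx⟩; simp at hx)

theorem IsCreation.adjoint_apply_cons (he : Orthonormal ℂ e)
    (hdense : (Submodule.span ℂ (Set.range e)).topologicalClosure = ⊤)
    (hc : IsCreation e c a j w β) (s a' : Fin r) (w' : Fin t) (l : List (Fin r × Fin t)) :
    adjoint c (e (s, (a', w') :: l)) =
      if (a', w') = (a, w) ∧ actsOn j (s, l) then (Real.sqrt β : ℂ) • e (s, l) else 0 := by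
  by_cases hhead : (a', w') = (a, w)
  · rw [hhead, weightedShift_adjoint_apply_image he hdense hc.apply_eq_smul
      (g := fun x => (x.1, (a, w) :: x.2)) (by rintro ⟨_, _⟩ ⟨_, _⟩; simp) (s, l)]
    split_ifs <;> simp_all
  · rw [if_neg (fun h => hhead h.1)]
    refine weightedShift_adjoint_apply_eq_zero he hdense hc.apply_eq_smul ?_
    rintro ⟨x, hx⟩
    exact hhead (List.cons.inj (congrArg Prod.snd hx)).1.symm

theorem IsCreation.add_adjoint_apply_vacuum (he : Orthonormal ℂ e)
    (hdense : (Submodule.span ℂ (Set.range e)).topologicalClosure = ⊤)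
    (hc : IsCreation e c a j w β) :
    (c + adjoint c) (e (j, [])) = (Real.sqrt β : ℂ) • e (j, [(a, w)]) := by
  rw [add_apply, hc, hc.adjoint_apply_nil he hdense]
  simp [actsOn]

theorem IsCreation.add_adjoint_sq_apply_of_ne (he : Orthonormal ℂ e)
    (hdense : (Submodule.span ℂ (Set.range e)).topologicalClosure = ⊤)
    (hc : IsCreation e c a j w β) (hβ : 0 ≤ β) (haj : a ≠ j) (s : Fin r) (z : Fin t)
    (l : List (Fin r × Fin t)) :
    ((c + adjoint c) ^ 2) (e (s, (j, z) :: l)) = (β : ℂ) • e (s, (j, z) :: l) := by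
  have hcreate : (c + adjoint c) (e (s, (j, z) :: l)) =
      (Real.sqrt β : ℂ) • e (s, (a, w) :: (j, z) :: l) := by
    rw [add_apply, hc, hc.adjoint_apply_cons he hdense]
    simp [actsOn, haj.symm]
  have hannihilate : (c + adjoint c) (e (s, (a, w) :: (j, z) :: l)) =
      (Real.sqrt β : ℂ) • e (s, (j, z) :: l) := by
    rw [add_apply, hc, hc.adjoint_apply_cons he hdense]
    simp [actsOn, haj]
  rw [pow_two, mul_apply_eq_comp, hcreate, map_smul, hannihilate, smul_smul,
    ← Complex.ofReal_mul, Real.mul_self_sqrt hβ]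

theorem IsCreation.add_adjoint_sq_apply_singleton (he : Orthonormal ℂ e)
    (hdense : (Submodule.span ℂ (Set.range e)).topologicalClosure = ⊤)
    (hc : IsCreation e c j j w β) (hβ : 0 ≤ β) {s : Fin r} (hsj : s ≠ j) (z : Fin t) :
    ((c + adjoint c) ^ 2) (e (s, [(j, z)])) =
      (β : ℂ) • e (s, [(j, w), (j, w), (j, z)]) + (β : ℂ) • e (s, [(j, z)]) := by
  have hcreate : (c + adjoint c) (e (s, [(j, z)])) =
      (Real.sqrt β : ℂ) • e (s, [(j, w), (j, z)]) := by
    rw [add_apply, hc, hc.adjoint_apply_cons he hdense]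
    simp [actsOn, hsj]
  have hboth : (c + adjoint c) (e (s, [(j, w), (j, z)])) =
      (Real.sqrt β : ℂ) • e (s, [(j, w), (j, w), (j, z)]) +
        (Real.sqrt β : ℂ) • e (s, [(j, z)]) := by
    rw [add_apply, hc, hc.adjoint_apply_cons he hdense]
    simp [actsOn]
  rw [pow_two, mul_apply_eq_comp, hcreate, map_smul, hboth, smul_add, smul_smul, smul_smul,
    ← Complex.ofReal_mul, Real.mul_self_sqrt hβ]

end MatriciallyFree

theorem inner_apply_mul_pow_four_mul {𝕜 H : Type*} [RCLike 𝕜] [NormedAddCommGroup H]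
    [InnerProductSpace 𝕜 H] [CompleteSpace H] {A B : H →L[𝕜] H} (hA : IsSelfAdjoint A)
    (hB : IsSelfAdjoint B) (x : H) :
    inner 𝕜 x ((A * B ^ 4 * A) x) = inner 𝕜 ((B ^ 2 * A) x) ((B ^ 2 * A) x) := by
  have hstar : A * B ^ 4 * A = adjoint (B ^ 2 * A) * (B ^ 2 * A) := by
    rw [← star_eq_adjoint, star_mul, hA.star_eq, (hB.pow 2).star_eq]
    noncomm_ring
  rw [hstar, mul_apply_eq_comp, adjoint_inner_right]

/-- For matricially free Gaussian operators
`ω_{i,j}(u) = ℘_{i,j}(u) + ℘_{i,j}(u)*` with covariances `b_{i,j}(u) ≥ 0`: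
if `p ≠ q ≠ k ≠ p` then `Ψ_q(ω_{p,q}(u) ω_{k,p}(t)⁴ ω_{p,q}(u)) = b_{k,p}(t)² b_{p,q}(u)`,
whereas for the diagonal middle operator (`p ≠ q`)
`Ψ_q(ω_{p,q}(u) ω_{p,p}(t)⁴ ω_{p,q}(u)) = 2 b_{p,p}(t)² b_{p,q}(u)`. -/
theorem stmt5 {H : Type} [NormedAddCommGroup H] [InnerProductSpace ℂ H] [CompleteSpace H]
    (r t : ℕ) (b : Fin r → Fin r → Fin t → ℝ) (hb : ∀ p q u, 0 ≤ b p q u)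
    (e : Fin r × List (Fin r × Fin t) → H) (he : Orthonormal ℂ e)
    (hdense : (Submodule.span ℂ (Set.range e)).topologicalClosure = ⊤)
    (c : Fin r → Fin r → Fin t → H →L[ℂ] H)
    (hc : ∀ p q u x, c p q u (e x) =
      if actsOn q x then (Real.sqrt (b p q u) : ℂ) • e (x.1, (p, u) :: x.2) else 0)
    (om : Fin r → Fin r → Fin t → H →L[ℂ] H)
    (hom : ∀ i j u, om i j u = c i j u + adjoint (c i j u))
    (p q k : Fin r) (u v : Fin t) (hpq : p ≠ q) :
    (q ≠ k → k ≠ p →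
      (@inner ℂ H _ (e (q, ([] : List (Fin r × Fin t))))
        ((om p q u * (om k p v) ^ 4 * om p q u) (e (q, [])))) =
        (((b k p v) ^ 2 * b p q u : ℝ) : ℂ)) ∧
    (@inner ℂ H _ (e (q, ([] : List (Fin r × Fin t))))
        ((om p q u * (om p p v) ^ 4 * om p q u) (e (q, [])))) =
        ((2 * (b p p v) ^ 2 * b p q u : ℝ) : ℂ) := by
  have hcre : ∀ i j w, IsCreation e (c i j w) i j w (b i j w) := hc
  have hsa : ∀ i j w, IsSelfAdjoint (om i j w) := fun i j w => by
    rw [hom, ← star_eq_adjoint]; exact IsSelfAdjoint.add_star_self _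
  have hee : ∀ x y, inner ℂ (e x) (e y) = if x = y then (1 : ℂ) else 0 :=
    orthonormal_iff_ite.mp he
  have hmoment : ∀ i w,
      inner ℂ (e (q, [])) ((om p q u * om i p w ^ 4 * om p q u) (e (q, []))) =
        b p q u *
          inner ℂ ((om i p w ^ 2) (e (q, [(p, u)]))) ((om i p w ^ 2) (e (q, [(p, u)]))) := by
    intro i w
    rw [inner_apply_mul_pow_four_mul (hsa p q u) (hsa i p w), mul_apply_eq_comp, hom p q u,
      (hcre p q u).add_adjoint_apply_vacuum he hdense, map_smul, inner_smul_left,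
      inner_smul_right, Complex.conj_ofReal, ← mul_assoc, ← Complex.ofReal_mul,
      Real.mul_self_sqrt (hb p q u)]
  refine ⟨fun _ hkp => ?_, ?_⟩
  · rw [hmoment, hom, (hcre k p v).add_adjoint_sq_apply_of_ne he hdense (hb k p v) hkp]
    simp only [inner_smul_left, inner_smul_right, hee, if_true, Complex.conj_ofReal]
    push_cast
    ring
  · rw [hmoment, hom, (hcre p p v).add_adjoint_sq_apply_singleton he hdense (hb p p v) hpq.symm]
    simp only [inner_add_left, inner_add_right, inner_smul_left, inner_smul_right, hee,
      Complex.conj_ofReal, Prod.mk.injEq, List.cons.injEq, List.nil_eq, reduceCtorEq, true_and,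
      and_false, if_true, if_false, mul_one, mul_zero, add_zero, zero_add]
    push_cast
    ring
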